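/- Let K be a CM field with maximal totally real subfield F. An element α ∈ O_K is a Weil generator for K if and only if: (1) αᾱ ∈ ℤ, (2) ℤ[α + ᾱ] = O_F, and (3) the principal ideal generated by α - ᾱ in O_K equals the relative different ideal Diff_{K/F}. -/

import Mathlib

open NumberField

/-- `F` is totally real: every complex embedding has real image. -/
def TotallyReal (F : Type*) [Field F] : Prop :=
  ∀ φ : F →+* ℂ, ∀ x : F, (starRingEnd ℂ) (φ x) = φ x

/-- `K` is totally imaginary: no complex embedding has real image. -/
def TotallyImaginary (K : Type*) [Field K] : Prop :=
  ∀ φ : K →+* ℂ, ∃ x : K, (starRingEnd ℂ) (φ x) ≠ φ x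

/-- `α` is a Weil generator of the CM field `K` with complex conjugation `c`:
`α` is an algebraic integer, `α·ᾱ ∈ ℤ`, and `ℤ[α, ᾱ] = 𝓞 K`. -/
def IsWeilGenerator (K : Type*) [Field K] (c : K ≃+* K) (α : K) : Prop :=
  α ∈ integralClosure ℤ K ∧ (∃ n : ℤ, α * c α = (n : K)) ∧
    Algebra.adjoin ℤ ({α, c α} : Set K) = integralClosure ℤ K

/-!
Write `s = α + ᾱ` and `n = α ᾱ`. Since `α² = s α - n`, every element of `ℤ[α, ᾱ]` has the form
`p + q α` with `p, q ∈ ℤ[s]`, and for `α ≠ ᾱ` it is fixed by conjugation only when `q = 0`;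
so a Weil generator has `ℤ[s] = 𝓞 F`, and once `ℤ[s] = 𝓞 F` we have `ℤ[α, ᾱ] = (𝓞 F)[α]`.
On the other hand `α - ᾱ = f'(α)` for the minimal polynomial `f = X² - s X + n` of `α` over `F`,
and Dedekind's formula `𝔣(α) · Diff_{K/F} = (f'(α))` for the conductor `𝔣(α)` of `(𝓞 F)[α]`
shows that `(α - ᾱ) = Diff_{K/F}` exactly when `(𝓞 F)[α] = 𝓞 K`. That `α ≠ ᾱ` holds on either
side comes from `𝓞 K ⊄ F` and from `Diff_{K/F} ≠ 0`.
-/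

open Polynomial Module

section AdjoinPair

variable {R A : Type*} [CommRing R] [CommRing A] [Algebra R A]

lemma exists_eq_add_mul_of_mem_adjoin_pair {a b : A} {r : R} (hab : a * b = algebraMap R A r)
    {x : A} (hx : x ∈ Algebra.adjoin R {a, b}) :
    ∃ p ∈ Algebra.adjoin R {a + b}, ∃ q ∈ Algebra.adjoin R {a + b}, x = p + q * a := by
  set S := Algebra.adjoin R {a + b}
  have hs : a + b ∈ S := Algebra.subset_adjoin rfl
  induction hx using Algebra.adjoin_induction with
  | mem x hx =>
    rcases hx with rfl | hx
    · exact ⟨0, zero_mem S, 1, one_mem S, by ring⟩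
    · exact ⟨a + b, hs, -1, neg_mem (one_mem S), by rw [Set.mem_singleton_iff.mp hx]; ring⟩
  | algebraMap s => exact ⟨algebraMap R A s, S.algebraMap_mem s, 0, zero_mem S, by ring⟩
  | add x y _ _ ihx ihy =>
    obtain ⟨p, hp, q, hq, rfl⟩ := ihx
    obtain ⟨p', hp', q', hq', rfl⟩ := ihy
    exact ⟨p + p', add_mem hp hp', q + q', add_mem hq hq', by ring⟩
  | mul x y _ _ ihx ihy =>
    obtain ⟨p, hp, q, hq, rfl⟩ := ihx
    obtain ⟨p', hp', q', hq', rfl⟩ := ihy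
    -- `a² = (a + b) a - r` reduces products back to the form `p + q a`
    refine ⟨p * p' - q * q' * algebraMap R A r,
      sub_mem (mul_mem hp hp') (mul_mem (mul_mem hq hq') (S.algebraMap_mem r)),
      p * q' + p' * q + q * q' * (a + b),
      add_mem (add_mem (mul_mem hp hq') (mul_mem hp' hq)) (mul_mem (mul_mem hq hq') hs), ?_⟩
    linear_combination (-(q * q')) * hab

lemma mem_adjoin_add_of_mem_adjoin_pair [IsDomain A] (c : A →ₐ[R] A) {a : A} {r : R}
    (hr : a * c a = algebraMap R A r) (hca : c (c a) = a) (hne : c a ≠ a) {x : A}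
    (hx : x ∈ Algebra.adjoin R {a, c a}) (hcx : c x = x) : x ∈ Algebra.adjoin R {a + c a} := by
  have hfixed : Algebra.adjoin R {a + c a} ≤ AlgHom.equalizer c (AlgHom.id R A) :=
    Algebra.adjoin_le <| Set.singleton_subset_iff.mpr <| by
      simp only [SetLike.mem_coe, AlgHom.mem_equalizer, map_add, hca, AlgHom.id_apply, add_comm]
  obtain ⟨p, hp, q, hq, rfl⟩ := exists_eq_add_mul_of_mem_adjoin_pair hr hx
  have hcp : c p = p := hfixed hp
  have hcq : c q = q := hfixed hq
  have hq0 : q * (c a - a) = 0 := by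
    rw [map_add, map_mul, hcp, hcq] at hcx
    linear_combination hcx
  rw [(mul_eq_zero.mp hq0).resolve_right (sub_ne_zero.mpr hne), zero_mul, add_zero]
  exact hp

end AdjoinPair

section QuadraticExtension

variable {F K : Type*} [Field F] [Field K] [Algebra F K]

lemma AlgEquiv.apply_apply_of_finrank_eq_two (h2 : finrank F K = 2) (c : K ≃ₐ[F] K) (x : K) :
    c (c x) = x := by
  have : FiniteDimensional F K := Module.finite_of_finrank_eq_succ h2
  have hcard : Nat.card (K ≃ₐ[F] K) ≤ 2 := h2 ▸ (Nat.card_le_card_of_injective _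
    AlgEquiv.coe_toAlgHom_injective).trans (card_algHom_le_finrank F K K)
  have hdvd : Nat.card (K ≃ₐ[F] K) ∣ 2 := by
    have : 0 < Nat.card (K ≃ₐ[F] K) := Nat.card_pos
    interval_cases Nat.card (K ≃ₐ[F] K) <;> norm_num
  have hsq : c ^ 2 = 1 := orderOf_dvd_iff_pow_eq_one.mp ((orderOf_dvd_natCard c).trans hdvd)
  simpa [pow_two] using congrArg (· x) hsq

lemma Algebra.adjoin_simple_eq_top_of_finrank_eq_two (h2 : finrank F K = 2) {a : K}
    (ha : a ∉ (algebraMap F K).range) : Algebra.adjoin F {a} = ⊤ := by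
  have := Subalgebra.isSimpleOrder_of_finrank_prime F K (h2 ▸ Nat.prime_two)
  refine (eq_bot_or_eq_top (Algebra.adjoin F {a})).resolve_left fun hbot => ha ?_
  exact Algebra.mem_bot.mp (hbot ▸ Algebra.self_mem_adjoin_singleton F a)

lemma minpoly_eq_of_notMem_range {a b : K} {t m : F} (ha : a ∉ (algebraMap F K).range)
    (ht : algebraMap F K t = a + b) (hm : algebraMap F K m = a * b) :
    minpoly F a = X ^ 2 - C t * X + C m := by
  have hQ : (X ^ 2 - C t * X + C m : F[X]).Monic := by monicity!
  have hQa : aeval a (X ^ 2 - C t * X + C m : F[X]) = 0 := by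
    simp only [map_add, map_sub, map_mul, map_pow, aeval_X, aeval_C, ht, hm]
    ring
  have hint : IsIntegral F a := ⟨_, hQ, hQa⟩
  refine (eq_of_monic_of_dvd_of_natDegree_le (minpoly.monic hint) hQ
    (minpoly.dvd F a hQa) ?_).symm
  calc (X ^ 2 - C t * X + C m : F[X]).natDegree = 2 := by compute_degree!
    _ ≤ (minpoly F a).natDegree := (minpoly.two_le_natDegree_iff hint).mpr ha

lemma aeval_derivative_minpoly_of_notMem_range {a b : K} {t m : F}
    (ha : a ∉ (algebraMap F K).range) (ht : algebraMap F K t = a + b)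
    (hm : algebraMap F K m = a * b) : aeval a (derivative (minpoly F a)) = a - b := by
  rw [minpoly_eq_of_notMem_range ha ht hm]
  simp only [derivative_sub, derivative_X_pow_succ, Nat.cast_one, map_add, map_one,
    pow_one, derivative_mul, derivative_C, zero_mul, derivative_X, mul_one, zero_add, add_zero,
    aeval_sub, map_mul, aeval_X, aeval_C, ht]
  ring

lemma aeval_derivative_minpoly_eq_sub_conj (h2 : finrank F K = 2) (c : K ≃ₐ[F] K)
    (hfix : ∀ x : K, c x = x ↔ x ∈ (algebraMap F K).range) {a : K} (hne : c a ≠ a) :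
    aeval a (derivative (minpoly F a)) = a - c a := by
  have hinv := c.apply_apply_of_finrank_eq_two h2
  obtain ⟨t, ht⟩ := (hfix (a + c a)).mp (by rw [map_add, hinv, add_comm])
  obtain ⟨m, hm⟩ := (hfix (a * c a)).mp (by rw [map_mul, hinv, mul_comm])
  exact aeval_derivative_minpoly_of_notMem_range ((hfix a).not.mp hne) ht hm

end QuadraticExtension

section RingOfIntegers

variable {F K : Type*} [Field F] [Field K] [Algebra F K]

lemma restrictScalars_adjoin_coe_eq_integralClosure_iff (α : 𝓞 K) :
    (Algebra.adjoin (𝓞 F) {(α : K)}).restrictScalars ℤ = integralClosure ℤ K ↔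
      Algebra.adjoin (𝓞 F) {α} = ⊤ := by
  have himage : ((Algebra.adjoin (𝓞 F) {(α : K)} : Subalgebra (𝓞 F) K) : Set K) =
      (↑) '' (Algebra.adjoin (𝓞 F) {α} : Set (𝓞 K)) := by
    show _ = ⇑(IsScalarTower.toAlgHom (𝓞 F) (𝓞 K) K) '' _
    rw [← Subalgebra.coe_map, AlgHom.map_adjoin_singleton]
    rfl
  have htop : (integralClosure ℤ K : Set K) = (↑) '' ((⊤ : Subalgebra (𝓞 F) (𝓞 K)) : Set (𝓞 K)) :=
    Set.ext fun x => ⟨fun hx => ⟨⟨x, hx⟩, trivial, rfl⟩, by rintro ⟨y, -, rfl⟩; exact y.2⟩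
  rw [← SetLike.coe_set_eq, Subalgebra.coe_restrictScalars, himage, htop,
    RingOfIntegers.coe_injective.image_injective.eq_iff, SetLike.coe_set_eq]

lemma adjoin_pair_eq_restrictScalars_adjoin {a b : K}
    (hs : Algebra.adjoin ℤ {a + b} =
      (integralClosure ℤ F).map (IsScalarTower.toAlgHom ℤ F K)) :
    Algebra.adjoin ℤ {a, b} = (Algebra.adjoin (𝓞 F) {a}).restrictScalars ℤ := by
  have hab : a + b ∈ Algebra.adjoin ℤ {a, b} :=
    add_mem (Algebra.subset_adjoin (by simp)) (Algebra.subset_adjoin (by simp))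
  obtain ⟨t, ht, hta⟩ := Subalgebra.mem_map.mp (hs ▸ Algebra.self_mem_adjoin_singleton ℤ (a + b))
  apply le_antisymm
  · refine Algebra.adjoin_le (Set.insert_subset_iff.mpr ⟨Algebra.self_mem_adjoin_singleton _ a,
      Set.singleton_subset_iff.mpr ?_⟩)
    rw [SetLike.mem_coe, Subalgebra.mem_restrictScalars, eq_sub_of_add_eq' hta.symm]
    exact sub_mem (Subalgebra.algebraMap_mem _ (⟨t, ht⟩ : 𝓞 F))
      (Algebra.self_mem_adjoin_singleton _ a)
  · intro x (hx : x ∈ Algebra.adjoin (𝓞 F) {a})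
    induction hx using Algebra.adjoin_induction with
    | mem x hx => exact Algebra.subset_adjoin (Set.mem_insert_iff.mpr (.inl hx))
    | algebraMap r =>
      have hr : algebraMap (𝓞 F) K r ∈ Algebra.adjoin ℤ {a + b} := hs ▸ ⟨r, r.2, rfl⟩
      exact Algebra.adjoin_le (Set.singleton_subset_iff.mpr hab) hr
    | add x y _ _ hx hy => exact add_mem hx hy
    | mul x y _ _ hx hy => exact mul_mem hx hy

lemma coe_aeval_derivative_minpoly [NumberField F] (α : 𝓞 K) :
    ((aeval α (derivative (minpoly (𝓞 F) α)) : 𝓞 K) : K) =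
      aeval (α : K) (derivative (minpoly F (α : K))) := by
  rw [RingOfIntegers.coe_eq_algebraMap,
    minpoly.isIntegrallyClosed_eq_field_fractions F K (Algebra.IsIntegral.isIntegral (R := 𝓞 F) α),
    derivative_map, aeval_map_algebraMap, aeval_algebraMap_apply]

variable [NumberField K]

lemma IntermediateField.eq_top_of_integralClosure_subset {S : IntermediateField F K}
    (h : (integralClosure ℤ K : Set K) ⊆ S) : S = ⊤ := by
  refine eq_top_iff.mpr fun x _ => ?_
  obtain ⟨r, s, -, rfl⟩ := IsFractionRing.div_surjective (A := 𝓞 K) x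
  exact div_mem (h r.2) (h s.2)

lemma conj_ne_of_adjoin_pair_eq_integralClosure (h2 : finrank F K = 2) (c : K ≃ₐ[F] K)
    (hfix : ∀ x : K, c x = x ↔ x ∈ (algebraMap F K).range) {a : K}
    (hadj : Algebra.adjoin ℤ {a, c a} = integralClosure ℤ K) : c a ≠ a := by
  intro hca
  have hsub : (integralClosure ℤ K : Set K) ⊆ (⊥ : IntermediateField F K) := by
    rw [← hadj, hca, Set.pair_eq_singleton]
    exact Algebra.adjoin_le (S := (⊥ : IntermediateField F K).toSubalgebra.restrictScalars ℤ)
      (Set.singleton_subset_iff.mpr (IntermediateField.mem_bot.mpr ((hfix a).mp hca)))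
  have := IntermediateField.bot_eq_top_iff_finrank_eq_one.mp
    (IntermediateField.eq_top_of_integralClosure_subset hsub)
  omega

lemma adjoin_add_conj_eq_map_integralClosure (h2 : finrank F K = 2) (c : K ≃ₐ[F] K)
    (hfix : ∀ x : K, c x = x ↔ x ∈ (algebraMap F K).range) {a : K} {n : ℤ}
    (hn : a * c a = n) (hne : c a ≠ a)
    (hadj : Algebra.adjoin ℤ {a, c a} = integralClosure ℤ K) :
    Algebra.adjoin ℤ {a + c a} = (integralClosure ℤ F).map (IsScalarTower.toAlgHom ℤ F K) := by
  have hinv := c.apply_apply_of_finrank_eq_two h2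
  apply le_antisymm
  · rw [Algebra.adjoin_le_iff, Set.singleton_subset_iff]
    obtain ⟨t, ht⟩ := (hfix (a + c a)).mp (by rw [map_add, hinv, add_comm])
    have hint : a + c a ∈ integralClosure ℤ K :=
      hadj ▸ add_mem (Algebra.subset_adjoin (by simp)) (Algebra.subset_adjoin (by simp))
    exact ⟨t, (isIntegral_algebraMap_iff (algebraMap F K).injective).mp (ht ▸ hint), ht⟩
  · rintro _ ⟨y, hy, rfl⟩
    refine mem_adjoin_add_of_mem_adjoin_pair ((c : K →ₐ[F] K).restrictScalars ℤ)
      (by simpa using hn) (hinv a) hne ?_ ((hfix _).mpr ⟨y, rfl⟩)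
    exact hadj ▸ hy.map (IsScalarTower.toAlgHom ℤ F K)

variable [NumberField F]

lemma span_aeval_derivative_minpoly_eq_differentIdeal_iff {α : 𝓞 K}
    (hα : Algebra.adjoin F {(α : K)} = ⊤) :
    Ideal.span {aeval α (derivative (minpoly (𝓞 F) α))} = differentIdeal (𝓞 F) (𝓞 K) ↔
      Algebra.adjoin (𝓞 F) {α} = ⊤ := by
  rw [← conductor_mul_differentIdeal (𝓞 F) F K α hα, mul_eq_right₀ differentIdeal_ne_bot,
    Ideal.one_eq_top, conductor_eq_top_iff_adjoin_eq_top]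

lemma span_eq_differentIdeal_iff_of_conj_ne (h2 : finrank F K = 2) (c : K ≃ₐ[F] K)
    (hfix : ∀ x : K, c x = x ↔ x ∈ (algebraMap F K).range) {α d : 𝓞 K} (hne : c α ≠ α)
    (hd : (d : K) = α - c α) :
    Ideal.span {d} = differentIdeal (𝓞 F) (𝓞 K) ↔ Algebra.adjoin (𝓞 F) {α} = ⊤ := by
  obtain rfl : d = aeval α (derivative (minpoly (𝓞 F) α)) := RingOfIntegers.ext <| by
    rw [hd, coe_aeval_derivative_minpoly, aeval_derivative_minpoly_eq_sub_conj h2 c hfix hne]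
  exact span_aeval_derivative_minpoly_eq_differentIdeal_iff
    (Algebra.adjoin_simple_eq_top_of_finrank_eq_two h2 ((hfix _).not.mp hne))

end RingOfIntegers

theorem stmt4_general (F K : Type*) [Field F] [Field K] [NumberField F] [NumberField K]
    [Algebra F K] (h2 : Module.finrank F K = 2) (c : K ≃ₐ[F] K)
    (hfix : ∀ x : K, c x = x ↔ x ∈ (algebraMap F K).range)
    (α : 𝓞 K) :
    IsWeilGenerator K c.toRingEquiv (algebraMap (𝓞 K) K α) ↔
      ((∃ n : ℤ, (algebraMap (𝓞 K) K α) * c (algebraMap (𝓞 K) K α) = (n : K)) ∧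
        Algebra.adjoin ℤ
            ({algebraMap (𝓞 K) K α + c (algebraMap (𝓞 K) K α)} : Set K) =
          Subalgebra.map (IsScalarTower.toAlgHom ℤ F K) (integralClosure ℤ F) ∧
        ∀ d : 𝓞 K,
          algebraMap (𝓞 K) K d =
              algebraMap (𝓞 K) K α - c (algebraMap (𝓞 K) K α) →
            Ideal.span {d} = differentIdeal (𝓞 F) (𝓞 K)) := by
  constructor
  · rintro ⟨-, ⟨n, hn⟩, hadj⟩
    have hne := conj_ne_of_adjoin_pair_eq_integralClosure h2 c hfix hadj
    have hs := adjoin_add_conj_eq_map_integralClosure h2 c hfix hn hne hadj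
    refine ⟨⟨n, hn⟩, hs, fun d hd =>
      (span_eq_differentIdeal_iff_of_conj_ne h2 c hfix hne hd).mpr ?_⟩
    rwa [← restrictScalars_adjoin_coe_eq_integralClosure_iff,
      ← adjoin_pair_eq_restrictScalars_adjoin hs]
  · rintro ⟨hn, hs, hdiff⟩
    have hne : c α ≠ α := fun h => differentIdeal_ne_bot <|
      (hdiff 0 (by simp [h])).symm.trans (Ideal.span_singleton_eq_bot.mpr rfl)
    have hint : IsIntegral ℤ (α - c α : K) := α.isIntegral_coe.sub (α.isIntegral_coe.map c)
    refine ⟨α.isIntegral_coe, hn, show Algebra.adjoin ℤ {(α : K), c α} = _ from ?_⟩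
    rw [adjoin_pair_eq_restrictScalars_adjoin hs, restrictScalars_adjoin_coe_eq_integralClosure_iff,
      ← span_eq_differentIdeal_iff_of_conj_ne h2 c hfix hne (d := ⟨_, hint⟩) rfl]
    exact hdiff _ rfl

/-- Let `K` be a CM field with maximal totally real subfield `F` and
complex conjugation `c`.  An algebraic integer `α ∈ 𝓞 K` is a Weil generator for `K`
if and only if (1) `α·ᾱ ∈ ℤ`, (2) `ℤ[α + ᾱ] = 𝓞 F` (viewed inside `K`), and
(3) the principal ideal of `𝓞 K` generated by `α - ᾱ` equals the relative different
ideal `Diff_{K/F}`. -/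
theorem stmt4 (F K : Type*) [Field F] [Field K] [NumberField F] [NumberField K]
    [Algebra F K] (hF : TotallyReal F) (hK : TotallyImaginary K)
    (h2 : Module.finrank F K = 2) (c : K ≃ₐ[F] K)
    (hc : ∀ φ : K →+* ℂ, ∀ x : K, φ (c x) = (starRingEnd ℂ) (φ x))
    (hfix : ∀ x : K, c x = x ↔ x ∈ (algebraMap F K).range)
    (α : 𝓞 K) :
    IsWeilGenerator K c.toRingEquiv (algebraMap (𝓞 K) K α) ↔
      ((∃ n : ℤ, (algebraMap (𝓞 K) K α) * c (algebraMap (𝓞 K) K α) = (n : K)) ∧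
        Algebra.adjoin ℤ
            ({algebraMap (𝓞 K) K α + c (algebraMap (𝓞 K) K α)} : Set K) =
          Subalgebra.map (IsScalarTower.toAlgHom ℤ F K) (integralClosure ℤ F) ∧
        ∀ d : 𝓞 K,
          algebraMap (𝓞 K) K d =
              algebraMap (𝓞 K) K α - c (algebraMap (𝓞 K) K α) →
            Ideal.span {d} = differentIdeal (𝓞 F) (𝓞 K)) :=
  stmt4_general F K h2 c hfix α
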